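/- arXiv:2309.02289 — 5 statements merged into one kernel-verified Lean document; each statement's English description precedes it below -/
import Mathlib

section
/- Let H be a complex Hilbert space and let M, S, T : H → H be bounded linear operators such that M is elliptic with constant c_M > 0 and S is elliptic with constant c_S > 0 (hence S is bijective with bounded inverse S⁻¹). Then there exist constants α > 0, β > 0 and C > 0 such that for all ξ, φ, ψ ∈ H: |⟪φ, M φ⟫ + α⟪ξ, S ξ⟫ + β⟪S⁻¹ψ, ψ⟫ − α⟪ξ, φ⟫ − β⟪S⁻¹ψ, T ξ⟫| ≥ C(‖ξ‖² + ‖φ‖² + ‖ψ‖²). -/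
/-!
With `v = S⁻¹ψ` the real part of the form is
`Re⟪φ, Mφ⟫ + α Re⟪ξ, Sξ⟫ + β Re⟪v, Sv⟫ - α Re⟪ξ, φ⟫ - β Re⟪v, Tξ⟫
  ≥ c_M‖φ‖² + α c_S‖ξ‖² + β c_S‖v‖² - α‖ξ‖‖φ‖ - β‖T‖‖v‖‖ξ‖`.
Taking `α = c_M c_S` and `β` small compared with `α c_S² / ‖T‖²`, Young's inequality absorbs
both cross terms into the diagonal ones, and `‖ψ‖ ≤ ‖S‖‖v‖` turns the resulting bound in
`‖v‖` into one in `‖ψ‖`.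
-/

open scoped ComplexInnerProductSpace

lemma exists_weights_quadratic_form_ge {a b : ℝ} (ha : 0 < a) (hb : 0 < b) (K : ℝ) :
    ∃ α β δ : ℝ, 0 < α ∧ 0 < β ∧ 0 < δ ∧ ∀ x y w : ℝ,
      δ * (x ^ 2 + y ^ 2 + w ^ 2) ≤
        a * y ^ 2 + α * b * x ^ 2 + β * b * w ^ 2 - α * x * y - β * K * w * x := by
  set β : ℝ := a * b ^ 3 / (2 * (K ^ 2 + 1))
  have hβ : 0 < β := by positivity
  have hβK : β * K ^ 2 ≤ a * b ^ 3 / 2 := by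
    rw [div_mul_eq_mul_div, div_le_div_iff₀ (by positivity) two_pos]
    nlinarith [sq_nonneg K, pow_pos hb 3]
  set δ : ℝ := min (min (a / 2) (a * b ^ 2 / 4)) (β * b / 2)
  have hδy : δ ≤ a / 2 := (min_le_left _ _).trans (min_le_left _ _)
  have hδx : δ ≤ a * b ^ 2 / 4 := (min_le_left _ _).trans (min_le_right _ _)
  have hδw : δ ≤ β * b / 2 := min_le_right _ _
  refine ⟨a * b, β, δ, by positivity, hβ, by positivity, fun x y w => ?_⟩
  have young_xy : a * b * x * y ≤ a * b ^ 2 / 2 * x ^ 2 + a / 2 * y ^ 2 := by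
    nlinarith [mul_nonneg ha.le (sq_nonneg (b * x - y))]
  have young_wx : β * K * w * x ≤ a * b ^ 2 / 4 * x ^ 2 + β * b / 2 * w ^ 2 := by
    have : 2 * b * (K * w * x) ≤ K ^ 2 * x ^ 2 + b ^ 2 * w ^ 2 := by
      nlinarith [sq_nonneg (K * x - b * w)]
    nlinarith [mul_le_mul_of_nonneg_left this hβ.le, mul_le_mul_of_nonneg_right hβK (sq_nonneg x)]
  nlinarith [mul_le_mul_of_nonneg_right hδy (sq_nonneg y),
    mul_le_mul_of_nonneg_right hδx (sq_nonneg x), mul_le_mul_of_nonneg_right hδw (sq_nonneg w)]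

lemma re_principal_part_ge {H : Type*} [NormedAddCommGroup H] [InnerProductSpace ℂ H]
    {M S T : H →L[ℂ] H} {cM cS α β : ℝ}
    (hM : ∀ u : H, cM * ‖u‖ ^ 2 ≤ (⟪u, M u⟫).re) (hS : ∀ u : H, cS * ‖u‖ ^ 2 ≤ (⟪u, S u⟫).re)
    (hα : 0 ≤ α) (hβ : 0 ≤ β) (ξ φ v : H) :
    cM * ‖φ‖ ^ 2 + α * cS * ‖ξ‖ ^ 2 + β * cS * ‖v‖ ^ 2
        - α * ‖ξ‖ * ‖φ‖ - β * ‖T‖ * ‖v‖ * ‖ξ‖ ≤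
      (⟪φ, M φ⟫ + (α : ℂ) * ⟪ξ, S ξ⟫ + (β : ℂ) * ⟪v, S v⟫
        - (α : ℂ) * ⟪ξ, φ⟫ - (β : ℂ) * ⟪v, T ξ⟫).re := by
  have hξφ : (⟪ξ, φ⟫).re ≤ ‖ξ‖ * ‖φ‖ := re_inner_le_norm (𝕜 := ℂ) ξ φ
  have hvTξ : (⟪v, T ξ⟫).re ≤ ‖T‖ * ‖v‖ * ‖ξ‖ := calc
    (⟪v, T ξ⟫).re ≤ ‖v‖ * ‖T ξ‖ := re_inner_le_norm (𝕜 := ℂ) v (T ξ)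
    _ ≤ ‖v‖ * (‖T‖ * ‖ξ‖) := by gcongr; exact T.le_opNorm ξ
    _ = ‖T‖ * ‖v‖ * ‖ξ‖ := by ring
  simp only [Complex.sub_re, Complex.add_re, Complex.re_ofReal_mul]
  linarith [hM φ, mul_le_mul_of_nonneg_left (hS ξ) hα, mul_le_mul_of_nonneg_left (hS v) hβ,
    mul_le_mul_of_nonneg_left hξφ hα, mul_le_mul_of_nonneg_left hvTξ hβ]

theorem theta_coercivity_of_mixed_principal_part_general
    {H : Type*} [NormedAddCommGroup H] [InnerProductSpace ℂ H]
    (M S Sinv T : H →L[ℂ] H) (cM cS : ℝ) (hcM : 0 < cM) (hcS : 0 < cS)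
    (hM : ∀ u : H, cM * ‖u‖ ^ 2 ≤ (⟪u, M u⟫).re)
    (hS : ∀ u : H, cS * ‖u‖ ^ 2 ≤ (⟪u, S u⟫).re)
    (hSinv_right : ∀ v : H, S (Sinv v) = v) :
    ∃ α β C : ℝ, 0 < α ∧ 0 < β ∧ 0 < C ∧
      ∀ ξ φ ψ : H,
        C * (‖ξ‖ ^ 2 + ‖φ‖ ^ 2 + ‖ψ‖ ^ 2) ≤
          ‖⟪φ, M φ⟫ + (α : ℂ) * ⟪ξ, S ξ⟫ + (β : ℂ) * ⟪Sinv ψ, ψ⟫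
            - (α : ℂ) * ⟪ξ, φ⟫ - (β : ℂ) * ⟪Sinv ψ, T ξ⟫‖ := by
  obtain ⟨α, β, δ, hα, hβ, hδ, hquad⟩ := exists_weights_quadratic_form_ge hcM hcS ‖T‖
  refine ⟨α, β, δ / (1 + ‖S‖ ^ 2), hα, hβ, by positivity, fun ξ φ ψ => ?_⟩
  have hre := re_principal_part_ge (T := T) hM hS hα.le hβ.le ξ φ (Sinv ψ)
  rw [hSinv_right] at hre
  have hψ : ‖ψ‖ ^ 2 ≤ ‖S‖ ^ 2 * ‖Sinv ψ‖ ^ 2 := by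
    rw [← mul_pow]
    gcongr
    simpa only [hSinv_right] using S.le_opNorm (Sinv ψ)
  calc δ / (1 + ‖S‖ ^ 2) * (‖ξ‖ ^ 2 + ‖φ‖ ^ 2 + ‖ψ‖ ^ 2)
      ≤ δ / (1 + ‖S‖ ^ 2) * ((1 + ‖S‖ ^ 2) * (‖ξ‖ ^ 2 + ‖φ‖ ^ 2 + ‖Sinv ψ‖ ^ 2)) := by
        gcongr
        linarith [sq_nonneg ‖Sinv ψ‖,
          mul_nonneg (sq_nonneg ‖S‖) (add_nonneg (sq_nonneg ‖ξ‖) (sq_nonneg ‖φ‖))]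
    _ = δ * (‖ξ‖ ^ 2 + ‖φ‖ ^ 2 + ‖Sinv ψ‖ ^ 2) := by field_simp
    _ ≤ _ := (hquad _ _ _).trans (by linarith)
    _ ≤ _ := Complex.re_le_norm _

/-- Abstract form of Lemma 5.1 of the paper: if `M` and `S` are elliptic bounded operators on a
complex Hilbert space (with `Sinv` the bounded inverse of `S`) and `T` is any bounded operator,
then there exist `α, β, C > 0` such that for all `ξ, φ, ψ`:
`|⟪φ, Mφ⟫ + α⟪ξ, Sξ⟫ + β⟪S⁻¹ψ, ψ⟫ − α⟪ξ, φ⟫ − β⟪S⁻¹ψ, Tξ⟫| ≥ C(‖ξ‖² + ‖φ‖² + ‖ψ‖²)`. -/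
theorem theta_coercivity_of_mixed_principal_part
    {H : Type*} [NormedAddCommGroup H] [InnerProductSpace ℂ H] [CompleteSpace H]
    (M S Sinv T : H →L[ℂ] H) (cM cS : ℝ) (hcM : 0 < cM) (hcS : 0 < cS)
    (hM : ∀ u : H, cM * ‖u‖ ^ 2 ≤ (⟪u, M u⟫).re)
    (hS : ∀ u : H, cS * ‖u‖ ^ 2 ≤ (⟪u, S u⟫).re)
    (hSinv_left : ∀ u : H, Sinv (S u) = u) (hSinv_right : ∀ v : H, S (Sinv v) = v) :
    ∃ α β C : ℝ, 0 < α ∧ 0 < β ∧ 0 < C ∧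
      ∀ ξ φ ψ : H,
        C * (‖ξ‖ ^ 2 + ‖φ‖ ^ 2 + ‖ψ‖ ^ 2) ≤
          ‖⟪φ, M φ⟫ + (α : ℂ) * ⟪ξ, S ξ⟫ + (β : ℂ) * ⟪Sinv ψ, ψ⟫
            - (α : ℂ) * ⟪ξ, φ⟫ - (β : ℂ) * ⟪Sinv ψ, T ξ⟫‖ :=
  theta_coercivity_of_mixed_principal_part_general M S Sinv T cM cS hcM hcS hM hS hSinv_right
end

section
/- Let H be a complex Hilbert space and S : H → H a bounded linear operator that is elliptic with constant c_S > 0. Let U, V ⊆ H be finite-dimensional subspaces with dim U = dim V, and suppose there is c_d > 0 such that for every u ∈ U: sup over nonzero v ∈ V of |⟪v, u⟫|/‖v‖ is ≥ c_d‖u‖. Then there exists a unique linear map P : U → V such that ⟪v, S(P u)⟫ = ⟪v, u⟫ for all u ∈ U and all v ∈ V; moreover, for all u ∈ U: ‖P u‖ ≤ c_S⁻¹‖u‖, ‖P u‖ ≥ (c_d/‖S‖)‖u‖, and Re ⟪P u, u⟫ ≥ c_S (c_d/‖S‖)² ‖u‖². -/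
/-!
Compressing `S` to `V` (project `S w` back onto `V`) gives an operator on `V` that is still
elliptic, hence injective, hence invertible since `V` is finite-dimensional. Inverting it on the
projection of `u` is the only way to solve `⟪v, S (P u)⟫ = ⟪v, u⟫` for all `v ∈ V`. Testing this
equation with `v = P u` and using ellipticity bounds `‖P u‖` from above, while the inf-sup
condition together with `|⟪v, u⟫| = |⟪v, S (P u)⟫| ≤ ‖v‖ ‖S‖ ‖P u‖` bounds it from below.
-/

open scoped ComplexInnerProductSpace

namespace ContinuousLinearMap

section Elliptic

variable {E : Type*} [NormedAddCommGroup E] [InnerProductSpace ℂ E]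

def IsElliptic (T : E →L[ℂ] E) (c : ℝ) : Prop :=
  ∀ u : E, c * ‖u‖ ^ 2 ≤ (⟪u, T u⟫).re

variable {T : E →L[ℂ] E} {c : ℝ}

theorem IsElliptic.injective (hT : T.IsElliptic c) (hc : 0 < c) : Function.Injective T := by
  refine (injective_iff_map_eq_zero T).2 fun u hu => ?_
  have hle := hT u
  rw [hu, inner_zero_right, Complex.zero_re] at hle
  have hsq : ‖u‖ ^ 2 ≤ 0 := nonpos_of_mul_nonpos_right hle hc
  simpa using hsq

theorem IsElliptic.norm_le_inv_mul_of_inner_eq (hT : T.IsElliptic c) (hc : 0 < c) {w x : E}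
    (hw : ⟪w, T w⟫ = ⟪w, x⟫) : ‖w‖ ≤ c⁻¹ * ‖x‖ := by
  have hbound : c * ‖w‖ ^ 2 ≤ ‖w‖ * ‖x‖ :=
    calc c * ‖w‖ ^ 2 ≤ (⟪w, x⟫).re := hw ▸ hT w
      _ ≤ ‖⟪w, x⟫‖ := Complex.re_le_norm _
      _ ≤ ‖w‖ * ‖x‖ := norm_inner_le_norm _ _
  rw [le_inv_mul_iff₀ hc]
  rcases (norm_nonneg w).eq_or_lt with hw0 | hw0
  · rw [← hw0, mul_zero]
    exact norm_nonneg x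
  · nlinarith

end Elliptic

section Compression

variable {H : Type*} [NormedAddCommGroup H] [InnerProductSpace ℂ H]
variable (S : H →L[ℂ] H) (V : Submodule ℂ H) [V.HasOrthogonalProjection]

noncomputable def compression : V →L[ℂ] V :=
  V.orthogonalProjectionOnto ∘L S ∘L V.subtypeL

theorem inner_compression (v w : V) : ⟪v, S.compression V w⟫ = ⟪(v : H), S w⟫ :=
  Submodule.inner_orthogonalProjectionOnto_eq_of_mem_left _ _

variable {S} in
theorem IsElliptic.compression {c : ℝ} (hS : S.IsElliptic c) : (S.compression V).IsElliptic c :=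
  fun w => by
    rw [inner_compression]
    exact hS w

theorem compression_apply_eq_orthogonalProjectionOnto_iff (w : V) (x : H) :
    S.compression V w = V.orthogonalProjectionOnto x ↔
      ∀ v : V, ⟪(v : H), S w⟫ = ⟪(v : H), x⟫ := by
  refine ⟨fun h v => ?_, fun h => ext_inner_left ℂ fun v => ?_⟩
  · rw [← inner_compression, h, Submodule.inner_orthogonalProjectionOnto_eq_of_mem_left]
  · rw [inner_compression, h, Submodule.inner_orthogonalProjectionOnto_eq_of_mem_left]

end Compression

section Galerkin

variable {H : Type*} [NormedAddCommGroup H] [InnerProductSpace ℂ H]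
variable {S : H →L[ℂ] H} {c : ℝ} (V : Submodule ℂ H) [FiniteDimensional ℂ V]

noncomputable def IsElliptic.galerkinSolver (hS : S.IsElliptic c) (hc : 0 < c) : H →ₗ[ℂ] V :=
  (LinearEquiv.ofInjectiveEndo _ ((hS.compression V).injective hc)).symm.toLinearMap ∘ₗ
    (V.orthogonalProjectionOnto : H →ₗ[ℂ] V)

theorem IsElliptic.galerkinSolver_eq_iff (hS : S.IsElliptic c) (hc : 0 < c) (x : H) (w : V) :
    hS.galerkinSolver V hc x = w ↔ ∀ v : V, ⟪(v : H), S w⟫ = ⟪(v : H), x⟫ := by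
  rw [← compression_apply_eq_orthogonalProjectionOnto_iff, eq_comm (a := S.compression V w)]
  exact LinearEquiv.symm_apply_eq _

end Galerkin

end ContinuousLinearMap

section InfSup

variable {H : Type*} [NormedAddCommGroup H] [InnerProductSpace ℂ H]

theorem iSup_norm_inner_div_norm_le_of_inner_eq {V : Submodule ℂ H} {x y : H}
    (h : ∀ v ∈ V, ⟪v, x⟫ = ⟪v, y⟫) :
    ⨆ v : {v : H // v ∈ V ∧ v ≠ 0}, ‖⟪(v : H), x⟫‖ / ‖(v : H)‖ ≤ ‖y‖ := by
  refine Real.iSup_le (fun v => ?_) (norm_nonneg y)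
  rw [h v v.2.1, div_le_iff₀ (norm_pos_iff.2 v.2.2), mul_comm]
  exact norm_inner_le_norm _ _

end InfSup

theorem discrete_preconditioner_exists_unique_and_bounds_general
    {H : Type*} [NormedAddCommGroup H] [InnerProductSpace ℂ H]
    (S : H →L[ℂ] H) (cS cd : ℝ) (hcS : 0 < cS) (hcd : 0 < cd)
    (hS : ∀ u : H, cS * ‖u‖ ^ 2 ≤ (⟪u, S u⟫).re)
    (U V : Submodule ℂ H) [FiniteDimensional ℂ V]
    (hinfsup : ∀ u ∈ U,
      cd * ‖u‖ ≤ ⨆ v : {v : H // v ∈ V ∧ v ≠ 0}, ‖⟪(v : H), u⟫‖ / ‖(v : H)‖) :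
    ∃ P : U →ₗ[ℂ] V,
      (∀ (u : U) (v : V), ⟪(v : H), S (P u : H)⟫ = ⟪(v : H), (u : H)⟫) ∧
      (∀ Q : U →ₗ[ℂ] V,
        (∀ (u : U) (v : V), ⟪(v : H), S (Q u : H)⟫ = ⟪(v : H), (u : H)⟫) → Q = P) ∧
      (∀ u : U, ‖(P u : H)‖ ≤ cS⁻¹ * ‖(u : H)‖) ∧
      (∀ u : U, cd / ‖S‖ * ‖(u : H)‖ ≤ ‖(P u : H)‖) ∧
      (∀ u : U, cS * (cd / ‖S‖) ^ 2 * ‖(u : H)‖ ^ 2 ≤ (⟪(P u : H), (u : H)⟫).re) := by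
  have hSell : S.IsElliptic cS := hS
  set P : U →ₗ[ℂ] V := hSell.galerkinSolver V hcS ∘ₗ U.subtype
  have hP : ∀ (u : U) (v : V), ⟪(v : H), S (P u : H)⟫ = ⟪(v : H), (u : H)⟫ := fun u =>
    (hSell.galerkinSolver_eq_iff V hcS u (P u)).1 rfl
  have hlower : ∀ u : U, cd / ‖S‖ * ‖(u : H)‖ ≤ ‖(P u : H)‖ := fun u => by
    rw [div_mul_eq_mul_div]
    refine div_le_of_le_mul₀ (norm_nonneg S) (norm_nonneg _) ?_
    calc cd * ‖(u : H)‖ ≤ ⨆ v : {v : H // v ∈ V ∧ v ≠ 0}, ‖⟪(v : H), (u : H)⟫‖ / ‖(v : H)‖ :=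
          hinfsup u u.2
      _ ≤ ‖S (P u)‖ := iSup_norm_inner_div_norm_le_of_inner_eq fun v hv => (hP u ⟨v, hv⟩).symm
      _ ≤ ‖(P u : H)‖ * ‖S‖ := by rw [mul_comm]; exact S.le_opNorm _
  refine ⟨P, hP, fun Q hQ => ?_, fun u => hSell.norm_le_inv_mul_of_inner_eq hcS (hP u (P u)),
    hlower, fun u => ?_⟩
  · ext u
    exact congrArg Subtype.val ((hSell.galerkinSolver_eq_iff V hcS u (Q u)).2 (hQ u)).symm
  · calc cS * (cd / ‖S‖) ^ 2 * ‖(u : H)‖ ^ 2 = cS * (cd / ‖S‖ * ‖(u : H)‖) ^ 2 := by ring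
      _ ≤ cS * ‖(P u : H)‖ ^ 2 := by gcongr; exact hlower u
      _ ≤ (⟪(P u : H), S (P u)⟫).re := hS _
      _ = (⟪(P u : H), (u : H)⟫).re := by rw [hP u (P u)]

/-- Abstract form of the construction `P = S_h⁻¹ ∘ I_h` in the proof of Lemma 5.2 of the paper:
given an elliptic bounded operator `S` on a complex Hilbert space and finite-dimensional
subspaces `U, V` of equal dimension satisfying a discrete inf-sup condition for the inner
product pairing, there is a unique linear map `P : U → V` with `⟪v, S(Pu)⟫ = ⟪v, u⟫` for all
`u ∈ U, v ∈ V`, and `P` satisfies `‖Pu‖ ≤ c_S⁻¹‖u‖`, `‖Pu‖ ≥ (c_d/‖S‖)‖u‖` and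
`Re ⟪Pu, u⟫ ≥ c_S (c_d/‖S‖)² ‖u‖²`. -/
theorem discrete_preconditioner_exists_unique_and_bounds
    {H : Type*} [NormedAddCommGroup H] [InnerProductSpace ℂ H] [CompleteSpace H]
    (S : H →L[ℂ] H) (cS cd : ℝ) (hcS : 0 < cS) (hcd : 0 < cd)
    (hS : ∀ u : H, cS * ‖u‖ ^ 2 ≤ (⟪u, S u⟫).re)
    (U V : Submodule ℂ H) [FiniteDimensional ℂ U] [FiniteDimensional ℂ V]
    (hdim : Module.finrank ℂ U = Module.finrank ℂ V)
    (hinfsup : ∀ u ∈ U,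
      cd * ‖u‖ ≤ ⨆ v : {v : H // v ∈ V ∧ v ≠ 0}, ‖⟪(v : H), u⟫‖ / ‖(v : H)‖) :
    ∃ P : U →ₗ[ℂ] V,
      (∀ (u : U) (v : V), ⟪(v : H), S (P u : H)⟫ = ⟪(v : H), (u : H)⟫) ∧
      (∀ Q : U →ₗ[ℂ] V,
        (∀ (u : U) (v : V), ⟪(v : H), S (Q u : H)⟫ = ⟪(v : H), (u : H)⟫) → Q = P) ∧
      (∀ u : U, ‖(P u : H)‖ ≤ cS⁻¹ * ‖(u : H)‖) ∧
      (∀ u : U, cd / ‖S‖ * ‖(u : H)‖ ≤ ‖(P u : H)‖) ∧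
      (∀ u : U, cS * (cd / ‖S‖) ^ 2 * ‖(u : H)‖ ^ 2 ≤ (⟪(P u : H), (u : H)⟫).re) :=
  discrete_preconditioner_exists_unique_and_bounds_general S cS cd hcS hcd hS U V hinfsup
end

section
/- Let H be a complex Hilbert space and let M, S, T : H → H be bounded linear operators such that M is elliptic with constant c_M > 0 and S is elliptic with constant c_S > 0, and fix c_d > 0. Then there exist constants α > 0, β > 0 and C > 0, depending only on c_M, c_S, c_d and the operator norms of M, S, T (and not on any subspace), such that the following holds: for all finite-dimensional subspaces U, V ⊆ H with dim U = dim V satisfying the inf-sup condition that for every u ∈ U the sup over nonzero v ∈ V of |⟪v, u⟫|/‖v‖ is ≥ c_d‖u‖, with P : U → V the unique linear map with ⟪v, S(P u)⟫ = ⟪v, u⟫ for all u ∈ U, v ∈ V, one has for all ξ ∈ V and φ, ψ ∈ U: |⟪φ, M φ⟫ + α⟪ξ, S ξ⟫ + β⟪P ψ, ψ⟫ − α⟪ξ, φ⟫ − β⟪P ψ, T ξ⟫| ≥ C(‖ξ‖² + ‖φ‖² + ‖ψ‖²). -/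
/-!
Taking the real part, ellipticity of `M` and `S`, the Galerkin identity
`⟪P ψ, ψ⟫ = ⟪P ψ, S (P ψ)⟫` and Cauchy–Schwarz bound the form from below by a real quadratic form in
`‖ξ‖, ‖φ‖, ‖P ψ‖`. With `α = c_M c_S` and `β = c_M c_S³ / (2 (‖T‖² + 1))`, Young's inequality absorbs
both cross terms, so this quadratic form dominates a multiple of `‖ξ‖² + ‖φ‖² + ‖P ψ‖²`. Finally the
inf-sup condition gives `c_d ‖ψ‖ ≤ ‖S‖ ‖P ψ‖`, since `⟪v, ψ⟫ = ⟪v, S (P ψ)⟫` for every `v ∈ V`.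
-/

open scoped ComplexInnerProductSpace InnerProductSpace

theorem mul_norm_le_norm_of_forall_inner_eq {𝕜 E : Type*} [RCLike 𝕜] [NormedAddCommGroup E]
    [InnerProductSpace 𝕜 E] {V : Submodule 𝕜 E} {u w : E} {c : ℝ}
    (hinf : c * ‖u‖ ≤ ⨆ v : {v : E // v ∈ V ∧ v ≠ 0}, ‖⟪(v : E), u⟫_𝕜‖ / ‖(v : E)‖)
    (hw : ∀ v ∈ V, ⟪v, w⟫_𝕜 = ⟪v, u⟫_𝕜) :
    c * ‖u‖ ≤ ‖w‖ := by
  refine hinf.trans (Real.iSup_le (fun v => ?_) (norm_nonneg w))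
  rw [← hw v v.2.1]
  exact div_le_of_le_mul₀ (norm_nonneg _) (norm_nonneg w)
    ((norm_inner_le_norm _ _).trans_eq (mul_comm _ _))

theorem exists_quadratic_coercivity_constants {cM cS cd t σ : ℝ}
    (hcM : 0 < cM) (hcS : 0 < cS) (hcd : 0 < cd) (hσ : 0 ≤ σ) :
    ∃ α β C : ℝ, 0 < α ∧ 0 < β ∧ 0 < C ∧
      ∀ a b p s : ℝ, 0 ≤ s → cd * s ≤ σ * p →
        C * (a ^ 2 + b ^ 2 + s ^ 2) ≤
          cM * b ^ 2 + α * cS * a ^ 2 + β * cS * p ^ 2 - α * a * b - β * t * p * a := by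
  set β := cM * cS ^ 3 / (2 * (t ^ 2 + 1)) with hβ_def
  -- `σ + 1` rather than `σ`, which may vanish
  set κ := (cd / (σ + 1)) ^ 2 with hκ_def
  have hβ : 0 < β := by positivity
  have hβt : β * t ^ 2 ≤ cM * cS ^ 3 / 2 := by
    rw [hβ_def, div_mul_eq_mul_div, div_le_div_iff₀ (by positivity) two_pos]
    nlinarith [mul_pos hcM (pow_pos hcS 3)]
  refine ⟨cM * cS, β, min (cM / 2) (min (cM * cS ^ 2 / 4) (β * cS / 2 * κ)),
    by positivity, hβ, by positivity, fun a b p s hs hsp => ?_⟩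
  have young_ab : cM * cS * a * b ≤ cM / 2 * b ^ 2 + cM * cS ^ 2 / 2 * a ^ 2 := by
    nlinarith [mul_nonneg hcM.le (sq_nonneg (cS * a - b))]
  have young_pa : β * t * p * a ≤ β * cS / 2 * p ^ 2 + cM * cS ^ 2 / 4 * a ^ 2 := by
    have h : 2 * cS * (β * t * p * a) ≤ 2 * cS * (β * cS / 2 * p ^ 2 + cM * cS ^ 2 / 4 * a ^ 2) := by
      nlinarith [mul_nonneg hβ.le (sq_nonneg (cS * p - t * a)),
        mul_le_mul_of_nonneg_right hβt (sq_nonneg a)]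
    exact le_of_mul_le_mul_left h (by positivity)
  have hκ : κ * s ^ 2 ≤ p ^ 2 := by
    have hsp' : cd * s / (σ + 1) ≤ |p| := by
      rw [div_le_iff₀ (by positivity)]
      nlinarith [le_abs_self p, abs_nonneg p]
    calc κ * s ^ 2 = (cd * s / (σ + 1)) ^ 2 := by rw [hκ_def]; ring
      _ ≤ |p| ^ 2 := pow_le_pow_left₀ (by positivity) hsp' 2
      _ = p ^ 2 := sq_abs p
  calc min (cM / 2) (min (cM * cS ^ 2 / 4) (β * cS / 2 * κ)) * (a ^ 2 + b ^ 2 + s ^ 2)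
      ≤ cM * cS ^ 2 / 4 * a ^ 2 + cM / 2 * b ^ 2 + β * cS / 2 * κ * s ^ 2 := by
        have h₁ := min_le_left (cM / 2) (min (cM * cS ^ 2 / 4) (β * cS / 2 * κ))
        have h₂ := (min_le_right (cM / 2) _).trans (min_le_left (cM * cS ^ 2 / 4) (β * cS / 2 * κ))
        have h₃ := (min_le_right (cM / 2) _).trans (min_le_right (cM * cS ^ 2 / 4) (β * cS / 2 * κ))
        nlinarith [mul_le_mul_of_nonneg_right h₁ (sq_nonneg b),
          mul_le_mul_of_nonneg_right h₂ (sq_nonneg a), mul_le_mul_of_nonneg_right h₃ (sq_nonneg s)]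
    _ ≤ cM * cS ^ 2 / 4 * a ^ 2 + cM / 2 * b ^ 2 + β * cS / 2 * p ^ 2 := by
        nlinarith [mul_le_mul_of_nonneg_left hκ (by positivity : (0 : ℝ) ≤ β * cS / 2)]
    _ ≤ cM * b ^ 2 + cM * cS * cS * a ^ 2 + β * cS * p ^ 2 - cM * cS * a * b - β * t * p * a := by
        nlinarith

theorem re_inner_apply_le_opNorm_mul {H : Type*} [NormedAddCommGroup H] [InnerProductSpace ℂ H]
    (T : H →L[ℂ] H) (x y : H) : (⟪x, T y⟫).re ≤ ‖T‖ * ‖x‖ * ‖y‖ := by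
  calc (⟪x, T y⟫).re ≤ ‖x‖ * ‖T y‖ := re_inner_le_norm (𝕜 := ℂ) x (T y)
    _ ≤ ‖x‖ * (‖T‖ * ‖y‖) := by gcongr; exact T.le_opNorm y
    _ = ‖T‖ * ‖x‖ * ‖y‖ := by ring

theorem le_re_mixed_form {H : Type*} [NormedAddCommGroup H] [InnerProductSpace ℂ H]
    (M S T : H →L[ℂ] H) {cM cS α β : ℝ} (hα : 0 ≤ α) (hβ : 0 ≤ β)
    (hM : ∀ u : H, cM * ‖u‖ ^ 2 ≤ (⟪u, M u⟫).re)
    (hS : ∀ u : H, cS * ‖u‖ ^ 2 ≤ (⟪u, S u⟫).re)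
    {ξ φ ψ w : H} (hw : ⟪w, S w⟫ = ⟪w, ψ⟫) :
    cM * ‖φ‖ ^ 2 + α * cS * ‖ξ‖ ^ 2 + β * cS * ‖w‖ ^ 2 - α * ‖ξ‖ * ‖φ‖ - β * ‖T‖ * ‖w‖ * ‖ξ‖ ≤
      (⟪φ, M φ⟫ + (α : ℂ) * ⟪ξ, S ξ⟫ + (β : ℂ) * ⟪w, ψ⟫
        - (α : ℂ) * ⟪ξ, φ⟫ - (β : ℂ) * ⟪w, T ξ⟫).re := by
  have hξφ : (⟪ξ, φ⟫).re ≤ ‖ξ‖ * ‖φ‖ := re_inner_le_norm (𝕜 := ℂ) ξ φ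
  have hwTξ := re_inner_apply_le_opNorm_mul T w ξ
  have hMφ := hM φ
  have hSξ := hS ξ
  have hSw := hS w
  rw [hw] at hSw
  simp only [Complex.sub_re, Complex.add_re, Complex.re_ofReal_mul]
  nlinarith [mul_le_mul_of_nonneg_left hSξ hα, mul_le_mul_of_nonneg_left hSw hβ,
    mul_le_mul_of_nonneg_left hξφ hα, mul_le_mul_of_nonneg_left hwTξ hβ]

theorem uniform_discrete_theta_coercivity_of_mixed_principal_part_general
    {H : Type*} [NormedAddCommGroup H] [InnerProductSpace ℂ H]
    (M S T : H →L[ℂ] H) (cM cS cd : ℝ) (hcM : 0 < cM) (hcS : 0 < cS) (hcd : 0 < cd)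
    (hM : ∀ u : H, cM * ‖u‖ ^ 2 ≤ (⟪u, M u⟫).re)
    (hS : ∀ u : H, cS * ‖u‖ ^ 2 ≤ (⟪u, S u⟫).re) :
    ∃ α β C : ℝ, 0 < α ∧ 0 < β ∧ 0 < C ∧
      ∀ U V : Submodule ℂ H, FiniteDimensional ℂ U → FiniteDimensional ℂ V →
        Module.finrank ℂ U = Module.finrank ℂ V →
        (∀ u ∈ U,
          cd * ‖u‖ ≤ ⨆ v : {v : H // v ∈ V ∧ v ≠ 0}, ‖⟪(v : H), u⟫‖ / ‖(v : H)‖) →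
        ∀ P : U →ₗ[ℂ] V,
          (∀ (u : U) (v : V), ⟪(v : H), S (P u : H)⟫ = ⟪(v : H), (u : H)⟫) →
          ∀ (ξ : V) (φ ψ : U),
            C * (‖(ξ : H)‖ ^ 2 + ‖(φ : H)‖ ^ 2 + ‖(ψ : H)‖ ^ 2) ≤
              ‖⟪(φ : H), M (φ : H)⟫ + (α : ℂ) * ⟪(ξ : H), S (ξ : H)⟫
                  + (β : ℂ) * ⟪(P ψ : H), (ψ : H)⟫
                - (α : ℂ) * ⟪(ξ : H), (φ : H)⟫ - (β : ℂ) * ⟪(P ψ : H), T (ξ : H)⟫‖ := by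
  obtain ⟨α, β, C, hα, hβ, hC, hquad⟩ :=
    exists_quadratic_coercivity_constants (t := ‖T‖) hcM hcS hcd (norm_nonneg S)
  refine ⟨α, β, C, hα, hβ, hC, fun U V _ _ _ hinf P hP ξ φ ψ => ?_⟩
  have hinfP : cd * ‖(ψ : H)‖ ≤ ‖S‖ * ‖(P ψ : H)‖ :=
    (mul_norm_le_norm_of_forall_inner_eq (hinf ψ ψ.2) fun v hv => hP ψ ⟨v, hv⟩).trans (S.le_opNorm _)
  calc _ ≤ _ := hquad ‖(ξ : H)‖ ‖(φ : H)‖ ‖(P ψ : H)‖ ‖(ψ : H)‖ (norm_nonneg _) hinfP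
    _ ≤ _ := le_re_mixed_form M S T hα.le hβ.le hM hS (hP ψ (P ψ))
    _ ≤ _ := Complex.re_le_norm _

/-- Abstract form of Lemma 5.2 of the paper: for elliptic bounded operators `M, S` and a bounded
operator `T` on a complex Hilbert space, there exist `α, β, C > 0` depending only on the
ellipticity constants, the inf-sup constant `c_d` and the operator norms, such that for all
finite-dimensional subspaces `U, V` of equal dimension satisfying the inf-sup condition with
constant `c_d`, and `P : U → V` the map with `⟪v, S(Pu)⟫ = ⟪v, u⟫`, the discrete principal form
is uniformly `Θ_h`-coercive. -/
theorem uniform_discrete_theta_coercivity_of_mixed_principal_part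
    {H : Type*} [NormedAddCommGroup H] [InnerProductSpace ℂ H] [CompleteSpace H]
    (M S T : H →L[ℂ] H) (cM cS cd : ℝ) (hcM : 0 < cM) (hcS : 0 < cS) (hcd : 0 < cd)
    (hM : ∀ u : H, cM * ‖u‖ ^ 2 ≤ (⟪u, M u⟫).re)
    (hS : ∀ u : H, cS * ‖u‖ ^ 2 ≤ (⟪u, S u⟫).re) :
    ∃ α β C : ℝ, 0 < α ∧ 0 < β ∧ 0 < C ∧
      ∀ U V : Submodule ℂ H, FiniteDimensional ℂ U → FiniteDimensional ℂ V →
        Module.finrank ℂ U = Module.finrank ℂ V →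
        (∀ u ∈ U,
          cd * ‖u‖ ≤ ⨆ v : {v : H // v ∈ V ∧ v ≠ 0}, ‖⟪(v : H), u⟫‖ / ‖(v : H)‖) →
        ∀ P : U →ₗ[ℂ] V,
          (∀ (u : U) (v : V), ⟪(v : H), S (P u : H)⟫ = ⟪(v : H), (u : H)⟫) →
          ∀ (ξ : V) (φ ψ : U),
            C * (‖(ξ : H)‖ ^ 2 + ‖(φ : H)‖ ^ 2 + ‖(ψ : H)‖ ^ 2) ≤
              ‖⟪(φ : H), M (φ : H)⟫ + (α : ℂ) * ⟪(ξ : H), S (ξ : H)⟫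
                  + (β : ℂ) * ⟪(P ψ : H), (ψ : H)⟫
                - (α : ℂ) * ⟪(ξ : H), (φ : H)⟫ - (β : ℂ) * ⟪(P ψ : H), T (ξ : H)⟫‖ :=
  uniform_discrete_theta_coercivity_of_mixed_principal_part_general M S T cM cS cd hcM hcS hcd hM hS
end

section
/- Let H be a complex Hilbert space, A, K : H → H bounded linear operators with K compact, and suppose B := A + K is injective. Let (X_n) and (Y_n) be sequences of finite-dimensional subspaces of H such that for every y ∈ H the distance from y to Y_n tends to 0 as n → ∞. Suppose there are constants C_Θ > 0 and c_a > 0 and, for each n, a linear map Θ_n : X_n → Y_n such that ‖Θ_n x‖ ≤ C_Θ‖x‖ and |⟪Θ_n x, A x⟫| ≥ c_a‖x‖² for all x ∈ X_n and all n. Then there exist n₀ ∈ ℕ and a constant c > 0 such that for all n ≥ n₀ and all x ∈ X_n: sup over nonzero y ∈ Y_n of |⟪y, B x⟫|/‖y‖ is ≥ c‖x‖. -/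
/-!
Suppose the inf-sup constants degenerate. Then there are indices `n k → ∞` and unit vectors
`u k ∈ X (n k)` with `‖⟪y, B (u k)⟫‖ ≤ ‖y‖ / (k + 1)` for all `y ∈ Y (n k)`. Approximating an
arbitrary `z` from `Y (n k)` shows that `B (u k)` converges weakly to `0`. As `B` is injective,
the range of `B†` is dense, so `u k` converges weakly to `0` as well, and the compact operator `K`
turns this into `K (u k) → 0` in norm. Testing with `Θ (u k) ∈ Y (n k)` finally gives
`ca ≤ CΘ * (1 / (k + 1) + ‖K (u k)‖) → 0`, contradicting `0 < ca`.
-/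

open scoped ComplexInnerProductSpace InnerProductSpace InnerProduct NNReal
open Filter Topology

section

variable {𝕜 E F : Type*} [RCLike 𝕜] [NormedAddCommGroup E] [InnerProductSpace 𝕜 E]
  [NormedAddCommGroup F] [InnerProductSpace 𝕜 F] {ι : Type*} {l : Filter ι}

theorem norm_inner_le_of_iSup_le {V : Submodule 𝕜 E} {v : E} {r : ℝ}
    (h : ⨆ y : {y : E // y ∈ V ∧ y ≠ 0}, ‖⟪(y : E), v⟫_𝕜‖ / ‖(y : E)‖ ≤ r) :
    ∀ y ∈ V, ‖⟪y, v⟫_𝕜‖ ≤ r * ‖y‖ := by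
  intro y hy
  rcases eq_or_ne y 0 with rfl | hy0
  · simp
  have hbdd : BddAbove
      (Set.range fun y : {y : E // y ∈ V ∧ y ≠ 0} => ‖⟪(y : E), v⟫_𝕜‖ / ‖(y : E)‖) :=
    ⟨‖v‖, by
      rintro - ⟨⟨z, -, hz0⟩, rfl⟩
      exact div_le_of_le_mul₀ (norm_nonneg _) (norm_nonneg _)
        ((norm_inner_le_norm _ _).trans_eq (mul_comm _ _))⟩
  rw [← div_le_iff₀ (norm_pos_iff.mpr hy0)]
  exact (le_ciSup hbdd ⟨y, hy, hy0⟩).trans h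

theorem exists_norm_eq_one_forall_norm_inner_le_of_iSup_lt {X : Submodule 𝕜 E} {V : Submodule 𝕜 F}
    (T : E →L[𝕜] F) (x : X) {c : ℝ}
    (h : ⨆ y : {y : F // y ∈ V ∧ y ≠ 0}, ‖⟪(y : F), T x⟫_𝕜‖ / ‖(y : F)‖ < c * ‖(x : E)‖) :
    ∃ u : X, ‖(u : E)‖ = 1 ∧ ∀ y ∈ V, ‖⟪y, T u⟫_𝕜‖ ≤ c * ‖y‖ := by
  have hx : 0 < ‖(x : E)‖ := by
    by_contra! hx
    have := (Real.iSup_nonneg fun y : {y : F // y ∈ V ∧ y ≠ 0} =>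
      div_nonneg (norm_nonneg ⟪(y : F), T x⟫_𝕜) (norm_nonneg (y : F))).trans_lt h
    simp [le_antisymm hx (norm_nonneg _)] at this
  refine ⟨((‖(x : E)‖⁻¹ : ℝ) : 𝕜) • x, ?_, fun y hy => ?_⟩
  · simp [norm_smul, hx.ne']
  · have hxy := norm_inner_le_of_iSup_le h.le y hy
    rw [Submodule.coe_smul, map_smul, inner_smul_right, norm_mul, RCLike.norm_ofReal,
      abs_of_pos (inv_pos.mpr hx), inv_mul_le_iff₀ hx]
    linarith

theorem norm_inner_le_add_mul_infDist {V : Submodule 𝕜 E} {v : E} {ε : ℝ} (hε : 0 ≤ ε)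
    (h : ∀ y ∈ V, ‖⟪y, v⟫_𝕜‖ ≤ ε * ‖y‖) (z : E) :
    ‖⟪z, v⟫_𝕜‖ ≤ ε * ‖z‖ + (ε + ‖v‖) * Metric.infDist z V := by
  rcases eq_or_ne v 0 with rfl | hv
  · simp only [inner_zero_right, norm_zero, add_zero]
    exact add_nonneg (mul_nonneg hε (norm_nonneg z)) (mul_nonneg hε Metric.infDist_nonneg)
  have hpos : 0 < ε + ‖v‖ := add_pos_of_nonneg_of_pos hε (norm_pos_iff.mpr hv)
  have hdist : ∀ y ∈ V, ‖⟪z, v⟫_𝕜‖ ≤ ε * ‖z‖ + (ε + ‖v‖) * dist z y := by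
    intro y hy
    calc ‖⟪z, v⟫_𝕜‖ = ‖⟪y, v⟫_𝕜 + ⟪z - y, v⟫_𝕜‖ := by rw [inner_sub_left, add_sub_cancel]
      _ ≤ ε * ‖y‖ + ‖z - y‖ * ‖v‖ := norm_add_le_of_le (h y hy) (norm_inner_le_norm _ _)
      _ ≤ ε * (‖z‖ + ‖z - y‖) + ‖z - y‖ * ‖v‖ := by
        gcongr
        simpa using norm_sub_le z (z - y)
      _ = ε * ‖z‖ + (ε + ‖v‖) * dist z y := by rw [dist_eq_norm]; ring
  have : (‖⟪z, v⟫_𝕜‖ - ε * ‖z‖) / (ε + ‖v‖) ≤ Metric.infDist z V :=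
    (Metric.le_infDist ⟨0, V.zero_mem⟩).mpr fun y hy => by
      rw [div_le_iff₀' hpos]
      linarith [hdist y hy]
  rw [div_le_iff₀' hpos] at this
  linarith

theorem tendsto_inner_zero_of_forall_norm_inner_le {V : ι → Submodule 𝕜 E}
    (hV : ∀ z, Tendsto (fun i => Metric.infDist z (V i : Set E)) l (𝓝 0))
    {v : ι → E} {C : ℝ} (hv : ∀ i, ‖v i‖ ≤ C) {ε : ι → ℝ} (hε : Tendsto ε l (𝓝 0))
    (hε0 : ∀ i, 0 ≤ ε i) (h : ∀ i, ∀ y ∈ V i, ‖⟪y, v i⟫_𝕜‖ ≤ ε i * ‖y‖) (z : E) :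
    Tendsto (fun i => ⟪z, v i⟫_𝕜) l (𝓝 0) := by
  refine squeeze_zero_norm (fun i => (norm_inner_le_add_mul_infDist (hε0 i) (h i) z).trans ?_)
    (by simpa using (hε.mul_const ‖z‖).add ((hε.add_const C).mul (hV z)))
  gcongr
  · exact Metric.infDist_nonneg
  · exact hv i

theorem tendsto_inner_zero_of_dense {u : ι → E} {C : ℝ≥0} (hu : ∀ i, ‖u i‖ ≤ C) {S : Set E}
    (hS : Dense S) (h : ∀ w ∈ S, Tendsto (fun i => ⟪w, u i⟫_𝕜) l (𝓝 0)) (w : E) :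
    Tendsto (fun i => ⟪w, u i⟫_𝕜) l (𝓝 0) := by
  have hlip : ∀ i, LipschitzWith C fun w : E => ⟪w, u i⟫_𝕜 := fun i =>
    LipschitzWith.of_dist_le_mul fun w w' => by
      rw [dist_eq_norm, dist_eq_norm, ← inner_sub_left, mul_comm]
      exact (norm_inner_le_norm _ _).trans (by gcongr; exact hu i)
  have hclosed := (LipschitzWith.uniformEquicontinuous _ C hlip).equicontinuous
    |>.isClosed_setOfPred_tendsto (l := l) (f := fun _ => (0 : 𝕜)) continuous_const
  exact hclosed.closure_subset_iff.mpr h (hS w)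

theorem tendsto_zero_of_isCompact_of_tendsto_inner {M : Set E} (hM : IsCompact M) {v : ι → E}
    (hv : ∀ i, v i ∈ M) (h : ∀ w, Tendsto (fun i => ⟪w, v i⟫_𝕜) l (𝓝 0)) :
    Tendsto v l (𝓝 0) := by
  refine hM.tendsto_nhds_of_unique_mapClusterPt (Eventually.of_forall hv) fun a _ ha => ?_
  have hcluster : MapClusterPt ⟪a, a⟫_𝕜 l fun i => ⟪a, v i⟫_𝕜 :=
    ha.continuousAt_comp (continuous_const.inner continuous_id).continuousAt
  exact inner_self_eq_zero.mp (eq_of_nhds_neBot (hcluster.clusterPt.mono (h a)).neBot)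

theorem ContinuousLinearMap.dense_range_adjoint_of_injective [CompleteSpace E] [CompleteSpace F]
    {T : E →L[𝕜] F} (hT : Function.Injective T) : Dense (Set.range (T†)) := by
  have hker : (T : E →ₗ[𝕜] F).ker = ⊥ := LinearMap.ker_eq_bot.mpr hT
  have hclosure := T.orthogonal_ker
  rw [hker, Submodule.bot_orthogonal_eq_top, eq_comm,
    ← Submodule.dense_iff_topologicalClosure_eq_top] at hclosure
  rwa [LinearMap.coe_range, ContinuousLinearMap.coe_coe] at hclosure

theorem tendsto_inner_zero_of_tendsto_inner_apply [CompleteSpace E] [CompleteSpace F]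
    {T : E →L[𝕜] F} (hT : Function.Injective T) {u : ι → E} {C : ℝ≥0} (hu : ∀ i, ‖u i‖ ≤ C)
    (h : ∀ z, Tendsto (fun i => ⟪z, T (u i)⟫_𝕜) l (𝓝 0)) (w : E) :
    Tendsto (fun i => ⟪w, u i⟫_𝕜) l (𝓝 0) :=
  tendsto_inner_zero_of_dense hu (ContinuousLinearMap.dense_range_adjoint_of_injective hT)
    (by rintro - ⟨z, rfl⟩; simpa only [ContinuousLinearMap.adjoint_inner_left] using h z) w

theorem IsCompactOperator.tendsto_zero_of_tendsto_inner [CompleteSpace E] [CompleteSpace F]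
    {K : E →L[𝕜] F} (hK : IsCompactOperator K) {u : ι → E} {C : ℝ} (hu : ∀ i, ‖u i‖ ≤ C)
    (h : ∀ w, Tendsto (fun i => ⟪w, u i⟫_𝕜) l (𝓝 0)) : Tendsto (fun i => K (u i)) l (𝓝 0) := by
  obtain ⟨M, hM, hKM⟩ := hK.image_closedBall_subset_compact C
  refine tendsto_zero_of_isCompact_of_tendsto_inner (𝕜 := 𝕜) hM
    (fun i => hKM ⟨u i, by simpa using hu i, rfl⟩) fun w => ?_
  simpa only [ContinuousLinearMap.adjoint_inner_left] using h ((K†) w)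

theorem mul_norm_sq_le_of_norm_inner_add_le (A K : E →L[𝕜] F) {t : F} {x : E} {ca CΘ ε : ℝ}
    (hε : 0 ≤ ε) (ht : ‖t‖ ≤ CΘ * ‖x‖) (hcoer : ca * ‖x‖ ^ 2 ≤ ‖⟪t, A x⟫_𝕜‖)
    (hres : ‖⟪t, (A + K) x⟫_𝕜‖ ≤ ε * ‖t‖) :
    ca * ‖x‖ ^ 2 ≤ CΘ * ‖x‖ * (ε + ‖K x‖) :=
  calc ca * ‖x‖ ^ 2 ≤ ‖⟪t, A x⟫_𝕜‖ := hcoer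
    _ = ‖⟪t, (A + K) x⟫_𝕜 - ⟪t, K x⟫_𝕜‖ := by
      rw [← inner_sub_right, add_apply, add_sub_cancel_right]
    _ ≤ ε * ‖t‖ + ‖t‖ * ‖K x‖ := norm_sub_le_of_le hres (norm_inner_le_norm _ _)
    _ = ‖t‖ * (ε + ‖K x‖) := by ring
    _ ≤ CΘ * ‖x‖ * (ε + ‖K x‖) := by gcongr

end

theorem uniform_discrete_inf_sup_of_compactly_perturbed_T_coercive_general
    {H : Type*} [NormedAddCommGroup H] [InnerProductSpace ℂ H] [CompleteSpace H]
    (A K : H →L[ℂ] H) (hK : IsCompactOperator (K : H → H))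
    (hinj : Function.Injective (A + K))
    (X Y : ℕ → Submodule ℂ H)
    (hdense : ∀ y : H,
      Filter.Tendsto (fun n => Metric.infDist y (Y n : Set H)) Filter.atTop (nhds 0))
    (CΘ ca : ℝ) (hca : 0 < ca)
    (Θ : ∀ n, X n →ₗ[ℂ] H)
    (hΘmem : ∀ n (x : X n), Θ n x ∈ Y n)
    (hΘbd : ∀ n (x : X n), ‖Θ n x‖ ≤ CΘ * ‖(x : H)‖)
    (hΘcoer : ∀ n (x : X n), ca * ‖(x : H)‖ ^ 2 ≤ ‖⟪Θ n x, A (x : H)⟫‖) :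
    ∃ (n₀ : ℕ) (c : ℝ), 0 < c ∧ ∀ n, n₀ ≤ n → ∀ x : X n,
      c * ‖(x : H)‖ ≤
        ⨆ y : {y : H // y ∈ Y n ∧ y ≠ 0}, ‖⟪(y : H), (A + K) (x : H)⟫‖ / ‖(y : H)‖ := by
  by_contra! hcon
  choose n hn x hx using fun k : ℕ => hcon k (1 / (k + 1)) (by positivity)
  choose u hu1 hres using fun k =>
    exists_norm_eq_one_forall_norm_inner_le_of_iSup_lt (A + K) (x k) (hx k)
  have hε : Tendsto (fun k : ℕ => 1 / ((k : ℝ) + 1)) atTop (𝓝 0) :=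
    tendsto_one_div_add_atTop_nhds_zero_nat
  have hBu := tendsto_inner_zero_of_forall_norm_inner_le
    (fun z => (hdense z).comp (tendsto_atTop_mono hn tendsto_id))
    (fun k => ((A + K).le_opNorm (u k)).trans_eq (by rw [hu1, mul_one])) hε
    (fun k => by positivity) hres
  have hu := tendsto_inner_zero_of_tendsto_inner_apply hinj (C := 1) (fun k => (hu1 k).le) hBu
  have hKu := hK.tendsto_zero_of_tendsto_inner (fun k => (hu1 k).le) hu
  have hbound : ∀ k : ℕ, ca ≤ CΘ * (1 / ((k : ℝ) + 1) + ‖K (u k)‖) := fun k => by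
    simpa [hu1] using mul_norm_sq_le_of_norm_inner_add_le A K (by positivity) (hΘbd _ (u k))
      (hΘcoer _ (u k)) (hres k _ (hΘmem _ (u k)))
  have hlim : Tendsto (fun k : ℕ => CΘ * (1 / ((k : ℝ) + 1) + ‖K (u k)‖)) atTop (𝓝 0) := by
    simpa using (hε.add hKu.norm).const_mul CΘ
  linarith [ge_of_tendsto' hlim hbound]

/-- Abstract form of Lemma 5.3 of the paper (a generalization of the discrete inf-sup theorem to
compact perturbations of a T-coercive operator): if `B = A + K` with `K` compact and `B`
injective, the test spaces `Y n` are asymptotically dense, and `A` is uniformly `Θ_n`-coercive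
on the trial spaces `X n` with uniformly bounded maps `Θ_n : X n → Y n`, then the Galerkin form
`b(x, y) = ⟪y, B x⟫` satisfies a uniform discrete inf-sup condition for all sufficiently
large `n`. -/
theorem uniform_discrete_inf_sup_of_compactly_perturbed_T_coercive
    {H : Type*} [NormedAddCommGroup H] [InnerProductSpace ℂ H] [CompleteSpace H]
    (A K : H →L[ℂ] H) (hK : IsCompactOperator (K : H → H))
    (hinj : Function.Injective (A + K))
    (X Y : ℕ → Submodule ℂ H)
    (hXfd : ∀ n, FiniteDimensional ℂ (X n)) (hYfd : ∀ n, FiniteDimensional ℂ (Y n))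
    (hdense : ∀ y : H,
      Filter.Tendsto (fun n => Metric.infDist y (Y n : Set H)) Filter.atTop (nhds 0))
    (CΘ ca : ℝ) (hCΘ : 0 < CΘ) (hca : 0 < ca)
    (Θ : ∀ n, X n →ₗ[ℂ] H)
    (hΘmem : ∀ n (x : X n), Θ n x ∈ Y n)
    (hΘbd : ∀ n (x : X n), ‖Θ n x‖ ≤ CΘ * ‖(x : H)‖)
    (hΘcoer : ∀ n (x : X n), ca * ‖(x : H)‖ ^ 2 ≤ ‖⟪Θ n x, A (x : H)⟫‖) :
    ∃ (n₀ : ℕ) (c : ℝ), 0 < c ∧ ∀ n, n₀ ≤ n → ∀ x : X n,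
      c * ‖(x : H)‖ ≤
        ⨆ y : {y : H // y ∈ Y n ∧ y ≠ 0}, ‖⟪(y : H), (A + K) (x : H)⟫‖ / ‖(y : H)‖ :=
  uniform_discrete_inf_sup_of_compactly_perturbed_T_coercive_general A K hK hinj X Y hdense CΘ ca
    hca Θ hΘmem hΘbd hΘcoer
end

section
/- Let H be a complex Hilbert space, S : H → H a bounded linear operator elliptic with constant c_S > 0, and U, V ⊆ H finite-dimensional subspaces with dim U = dim V satisfying, for some c_d > 0, the inf-sup condition that for every u ∈ U the sup over nonzero v ∈ V of |⟪v, u⟫|/‖v‖ is ≥ c_d‖u‖. Let P : U → V be the unique linear map with ⟪v, S(P u)⟫ = ⟪v, u⟫ for all u ∈ U, v ∈ V. Let l : V × U → ℂ be a sesquilinear form (conjugate-linear in the second argument) satisfying, for some c_l > 0, the inf-sup condition that for every ξ ∈ V the sup over nonzero w ∈ U of |l(ξ, w)|/‖w‖ is ≥ c_l‖ξ‖. Define d : U × U → ℂ by d(u, w) := l(P u, w). Then for every u ∈ U: sup over nonzero w ∈ U of |d(u, w)|/‖w‖ is ≥ (c_l · c_d/‖S‖) · ‖u‖. -/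
open scoped ComplexInnerProductSpace

/-- Abstract form of the inf-sup transport estimate in the proof of Theorem 5.6 of the paper:
with `S` elliptic, `U, V` finite-dimensional subspaces of equal dimension satisfying the
inf-sup condition for the inner product pairing with constant `c_d`, `P : U → V` the map with
`⟪v, S(Pu)⟫ = ⟪v, u⟫`, and `l` a sesquilinear form on `V × U` satisfying an inf-sup condition
with constant `c_l`, the form `d(u, w) := l(Pu, w)` satisfies an inf-sup condition with
constant `c_l c_d / ‖S‖`. -/
theorem inf_sup_transport_through_discrete_preconditioner
    {H : Type*} [NormedAddCommGroup H] [InnerProductSpace ℂ H] [CompleteSpace H]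
    (S : H →L[ℂ] H) (cS cd cl : ℝ) (hcS : 0 < cS) (hcd : 0 < cd) (hcl : 0 < cl)
    (hS : ∀ u : H, cS * ‖u‖ ^ 2 ≤ (⟪u, S u⟫).re)
    (U V : Submodule ℂ H) [FiniteDimensional ℂ U] [FiniteDimensional ℂ V]
    (hdim : Module.finrank ℂ U = Module.finrank ℂ V)
    (hinfsup : ∀ u ∈ U,
      cd * ‖u‖ ≤ ⨆ v : {v : H // v ∈ V ∧ v ≠ 0}, ‖⟪(v : H), u⟫‖ / ‖(v : H)‖)
    (P : U →ₗ[ℂ] V)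
    (hP : ∀ (u : U) (v : V), ⟪(v : H), S (P u : H)⟫ = ⟪(v : H), (u : H)⟫)
    (l : V →ₗ[ℂ] U →ₗ⋆[ℂ] ℂ)
    (hl : ∀ ξ : V, cl * ‖ξ‖ ≤ ⨆ w : {w : U // w ≠ 0}, ‖l ξ (w : U)‖ / ‖(w : U)‖) :
    ∀ u : U, cl * cd / ‖S‖ * ‖u‖ ≤ ⨆ w : {w : U // w ≠ 0}, ‖l (P u) (w : U)‖ / ‖(w : U)‖ := by
  intro u
  have key : cd * ‖(u : H)‖ ≤ ‖S‖ * ‖(P u : H)‖ := by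
    refine (hinfsup (u : H) u.2).trans ?_
    refine Real.iSup_le (fun v => ?_)
      (mul_nonneg (norm_nonneg _) (norm_nonneg _))
    have hv : (⟨(v : H), v.2.1⟩ : V) = (⟨(v : H), v.2.1⟩ : V) := rfl
    have h1 : ⟪(v : H), (u : H)⟫ = ⟪(v : H), S (P u : H)⟫ :=
      (hP u ⟨(v : H), v.2.1⟩).symm
    rw [h1]
    have h2 : ‖⟪(v : H), S (P u : H)⟫‖ ≤ ‖(v : H)‖ * ‖S (P u : H)‖ :=
      norm_inner_le_norm _ _
    have h3 : ‖S (P u : H)‖ ≤ ‖S‖ * ‖(P u : H)‖ := S.le_opNorm _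
    have hvn : (0 : ℝ) < ‖(v : H)‖ := norm_pos_iff.mpr v.2.2
    rw [div_le_iff₀ hvn]
    calc ‖⟪(v : H), S (P u : H)⟫‖ ≤ ‖(v : H)‖ * ‖S (P u : H)‖ := h2
      _ ≤ ‖(v : H)‖ * (‖S‖ * ‖(P u : H)‖) := by
          exact mul_le_mul_of_nonneg_left h3 (norm_nonneg _)
      _ = ‖S‖ * ‖(P u : H)‖ * ‖(v : H)‖ := by ring
  refine le_trans ?_ (hl (P u))
  rcases eq_or_lt_of_le (norm_nonneg S) with hz | hpos
  · have : cd * ‖(u : H)‖ ≤ 0 := by rw [← hz] at key; linarith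
    have hu0 : ‖(u : H)‖ = 0 := le_antisymm (by nlinarith) (norm_nonneg _)
    have : ‖u‖ = 0 := hu0
    rw [this, mul_zero]
    positivity
  · rw [div_mul_eq_mul_div, div_le_iff₀ hpos]
    have hPn : ‖P u‖ = ‖(P u : H)‖ := rfl
    have hun : ‖u‖ = ‖(u : H)‖ := rfl
    rw [hPn, hun]
    nlinarith [key, norm_nonneg (u : H)]
end
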